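/- arXiv:0909.4639 — 3 statements merged into one kernel-verified Lean document; each statement's English description precedes it below -/
import Mathlib

section
/- Let G be a finite group with normal subgroups N ⊴ G and a subgroup L ≤ G with NL = G. If Q/R is a section of G with Q ≤ L, R ⊴ Q, and Q/R simple non-abelian, then either Q/R is isomorphic to a section of G/N or Q/R is isomorphic to a section of L ∩ N. -/
/-! The image of `Q ∩ N` in the simple group `Q/R` is normal, so it is trivial or everything.
If it is trivial, `Q → Q/R` factors through `Q/(Q ∩ N)`, which embeds in `G/N`; otherwise
`Q ∩ N`, a subgroup of `L ∩ N`, already maps onto `Q/R`. -/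

/-- `S` is (isomorphic to) a section of `H`, i.e. a quotient `Q/R` with `R ⊴ Q ≤ H`. -/
def IsSectionOf (S H : Type*) [Group S] [Group H] : Prop :=
  ∃ (Q : Subgroup H) (φ : Q →* S), Function.Surjective φ

namespace IsSectionOf

variable {S H K : Type*} [Group S] [Group H] [Group K]

theorem of_surjective (f : H →* S) (hf : Function.Surjective f) : IsSectionOf S H :=
  ⟨⊤, f.comp (Subgroup.topEquiv (G := H)).toMonoidHom, hf.comp Subgroup.topEquiv.surjective⟩

theorem of_injective (h : IsSectionOf S H) (e : H →* K) (he : Function.Injective e) :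
    IsSectionOf S K := by
  obtain ⟨Q, f, hf⟩ := h
  let ψ := (Q.equivMapOfInjective e he).symm
  exact ⟨Q.map e, f.comp ψ.toMonoidHom, hf.comp ψ.surjective⟩

theorem of_ker_le (φ : H →* K) (f : H →* S) (hf : Function.Surjective f)
    (hker : φ.ker ≤ f.ker) : IsSectionOf S K :=
  (of_surjective (QuotientGroup.lift φ.ker f hker)
    (QuotientGroup.lift_surjective_of_surjective _ _ hf _)).of_injective
    (QuotientGroup.kerLift φ) (QuotientGroup.kerLift_injective φ)

theorem of_map_eq_top (f : H →* S) (K : Subgroup H) (h : K.map f = ⊤) : IsSectionOf S K :=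
  of_surjective (f.comp K.subtype) <| by
    rw [← MonoidHom.range_eq_top, MonoidHom.range_comp, K.range_subtype, h]

end IsSectionOf

theorem IsSimpleGroup.isSectionOf_or_isSectionOf_ker {S H K : Type*} [Group S] [Group H]
    [Group K] [IsSimpleGroup S] (f : H →* S) (hf : Function.Surjective f) (φ : H →* K) :
    IsSectionOf S K ∨ IsSectionOf S φ.ker := by
  rcases eq_bot_or_eq_top_of_normal _ (φ.normal_ker.map f hf) with h | h
  · exact .inl (.of_ker_le φ f hf ((Subgroup.map_eq_bot_iff _).1 h))
  · exact .inr (.of_map_eq_top f _ h)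

theorem simple_section_of_sup_general {G : Type*} [Group G]
    (N : Subgroup G) [N.Normal] (L : Subgroup G)
    (Q : Subgroup G) (hQL : Q ≤ L) (R : Subgroup Q) [R.Normal]
    (hsimple : IsSimpleGroup (Q ⧸ R)) :
    IsSectionOf (Q ⧸ R) (G ⧸ N) ∨ IsSectionOf (Q ⧸ R) ↥(L ⊓ N) := by
  let φ : Q →* G ⧸ N := (QuotientGroup.mk' N).comp Q.subtype
  have mem_N_of_mem_ker (x : φ.ker) : (x : G) ∈ N :=
    (QuotientGroup.eq_one_iff _).1 x.2
  let ι : φ.ker →* ↥(L ⊓ N) := (Q.subtype.comp φ.ker.subtype).codRestrict (L ⊓ N)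
    fun x => ⟨hQL x.1.2, mem_N_of_mem_ker x⟩
  have hι : Function.Injective ι := fun x y hxy =>
    Subtype.ext (Subtype.ext (congrArg (fun z : ↥(L ⊓ N) => (z : G)) hxy))
  exact (hsimple.isSectionOf_or_isSectionOf_ker (QuotientGroup.mk' R)
    (QuotientGroup.mk'_surjective R) φ).imp id (·.of_injective ι hι)

/-- If `N ⊴ G`, `L ≤ G` with `NL = G`, and `Q/R` is a non-abelian simple section of `G`
with `Q ≤ L`, then `Q/R` is isomorphic to a section of `G/N` or to a section of `L ∩ N`. -/
theorem simple_section_of_sup {G : Type*} [Group G] [Finite G]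
    (N : Subgroup G) [N.Normal] (L : Subgroup G) (hNL : N ⊔ L = ⊤)
    (Q : Subgroup G) (hQL : Q ≤ L) (R : Subgroup Q) [R.Normal]
    (hsimple : IsSimpleGroup (Q ⧸ R)) (hnonab : ¬ ∀ a b : Q ⧸ R, a * b = b * a) :
    IsSectionOf (Q ⧸ R) (G ⧸ N) ∨ IsSectionOf (Q ⧸ R) ↥(L ⊓ N) :=
  simple_section_of_sup_general N L Q hQL R hsimple
end

section
/- Let G be a finite group, K ⊴ G a normal subgroup, and suppose G = K⟨S⟩ for some subset S of G. Then there is a subset W ⊆ S with |W| ≤ log₂|G : K| such that G = K⟨W⟩. -/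
/-!
Adjoin elements of `S` to `K` one at a time, each outside the subgroup generated so far. The index
of a proper overgroup of a finite-index subgroup is a proper divisor of its index, so every step at
least halves the index, and `2 ^ |W| ≤ |G : K|`.
-/

namespace Subgroup

variable {G : Type*} [Group G]

theorem two_mul_index_le_of_lt {H K : Subgroup G} [H.FiniteIndex] (hHK : H < K) :
    2 * K.index ≤ H.index := by
  obtain ⟨m, hm⟩ := index_dvd_of_le hHK.le
  have hlt : K.index < H.index := index_strictAnti hHK
  have hm0 : m ≠ 0 := by
    rintro rfl
    exact FiniteIndex.index_ne_zero (hm.trans (mul_zero _))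
  have hm1 : m ≠ 1 := by
    rintro rfl
    omega
  rw [hm, mul_comm 2]
  exact Nat.mul_le_mul_left _ (show 2 ≤ m by omega)

theorem exists_finset_two_pow_card_le_index_sup_closure_eq_top (H : Subgroup G) [H.FiniteIndex]
    {S : Set G} (hS : H ⊔ closure S = ⊤) :
    ∃ W : Finset G, (W : Set G) ⊆ S ∧ 2 ^ W.card ≤ H.index ∧ H ⊔ closure (W : Set G) = ⊤ := by
  classical
  induction hn : H.index using Nat.strong_induction_on generalizing H with
  | _ n ih =>
    by_cases hH : H = ⊤
    · refine ⟨∅, by simp, ?_, by simp [hH]⟩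
      simpa [← hn] using Nat.one_le_iff_ne_zero.2 FiniteIndex.index_ne_zero
    obtain ⟨s, hsS, hsH⟩ : ∃ s ∈ S, s ∉ H := by
      by_contra! h
      exact hH (by rwa [sup_eq_left.2 ((closure_le H).2 h)] at hS)
    set H' := H ⊔ closure {s}
    have hHH' : H < H' :=
      SetLike.lt_iff_le_and_exists.2 ⟨le_sup_left, s, mem_sup_right (subset_closure rfl), hsH⟩
    have : H'.FiniteIndex := finiteIndex_of_le hHH'.le
    have hidx : 2 * H'.index ≤ n := hn ▸ two_mul_index_le_of_lt hHH'
    have hS' : H' ⊔ closure S = ⊤ := top_le_iff.1 (hS ▸ sup_le_sup_right hHH'.le _)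
    obtain ⟨W, hWS, hWcard, hW⟩ := ih H'.index (hn ▸ index_strictAnti hHH') H' hS' rfl
    refine ⟨insert s W, ?_, ?_, ?_⟩
    · rw [Finset.coe_insert]
      exact Set.insert_subset hsS hWS
    · calc 2 ^ (insert s W).card ≤ 2 ^ (W.card + 1) :=
            Nat.pow_le_pow_right two_pos (Finset.card_insert_le _ _)
        _ = 2 * 2 ^ W.card := by ring
        _ ≤ n := by omega
    · rwa [Finset.coe_insert, ← Set.singleton_union, closure_union, ← sup_assoc]

end Subgroup

theorem exists_small_generating_subset_general {G : Type*} [Group G] [Finite G]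
    (K : Subgroup G) (S : Set G)
    (hS : K ⊔ Subgroup.closure S = ⊤) :
    ∃ W : Finset G, (W : Set G) ⊆ S ∧ W.card ≤ Nat.log 2 K.index ∧
      K ⊔ Subgroup.closure (W : Set G) = ⊤ := by
  obtain ⟨W, hWS, hWcard, hW⟩ := K.exists_finset_two_pow_card_le_index_sup_closure_eq_top hS
  exact ⟨W, hWS, Nat.le_log_of_pow_le one_lt_two hWcard, hW⟩

/-- If `G = K⟨S⟩` with `K ⊴ G`, then there is `W ⊆ S` with `|W| ≤ log₂ |G : K|`
such that `G = K⟨W⟩`. -/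
theorem exists_small_generating_subset {G : Type*} [Group G] [Finite G]
    (K : Subgroup G) [K.Normal] (S : Set G)
    (hS : K ⊔ Subgroup.closure S = ⊤) :
    ∃ W : Finset G, (W : Set G) ⊆ S ∧ W.card ≤ Nat.log 2 K.index ∧
      K ⊔ Subgroup.closure (W : Set G) = ⊤ :=
  exists_small_generating_subset_general K S hS
end

section
/- Gaschütz's lemma (extended form): Let G be a finite group, N ⊴ G, X ⊆ G, and y₁,...,y_n ∈ G with G = N⟨X, y₁,...,y_n⟩, where n ≥ d(G) (the minimal number of generators of G). Then there exist a₁,...,a_n ∈ N such that G = ⟨X, a₁y₁, ..., a_n y_n⟩. -/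
/-!
Call a subgroup `H` admissible if `X ⊆ H` and `NH = G`, and for `y` with `N⟨X, y⟩ = G` let
`φ_y(H)` count the `a ∈ Nⁿ` with `⟨X, a₁y₁, …, aₙyₙ⟩ = H`; only admissible `H` have
`φ_y(H) ≠ 0`. For admissible `H`, sorting the `a ∈ Nⁿ` with all `aᵢyᵢ ∈ H` by the subgroup
they generate with `X` gives `∑_{K ≤ H} φ_y(K) = |N ∩ H|ⁿ`, because each `Nyᵢ ∩ H` is a coset
of `N ∩ H`. The right side does not depend on `y`, so by induction on `H` neither does
`φ_y(H)`. Since `n ≥ d(G)` some `y'` generates `G` outright, so `φ_y(G) = φ_{y'}(G) ≥ 1`.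
-/

open Subgroup Finset Pointwise

theorem Finset.exists_subset_range_of_card_le {α : Type*} [Nonempty α] {D : Finset α} {n : ℕ}
    (h : #D ≤ n) : ∃ y : Fin n → α, (D : Set α) ⊆ Set.range y := by
  let e : Fin #D → α := fun i => D.equivFin.symm i
  refine ⟨Function.extend (Fin.castLE h) e fun _ => Classical.arbitrary α, fun d hd => ?_⟩
  refine ⟨Fin.castLE h (D.equivFin ⟨d, hd⟩), ?_⟩
  simp [(Fin.castLE_injective h).extend_apply, e]

section Translates

variable {G : Type*} [Group G]

theorem Subgroup.card_mem_and_mul_mem_eq_card_inf {N H : Subgroup G} {g : G}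
    (hg : g ∈ (N : Set G) * (H : Set G)) :
    Nat.card {b // b ∈ N ∧ b * g ∈ H} = Nat.card (N ⊓ H : Subgroup G) := by
  obtain ⟨m, hm, h, hh, rfl⟩ := hg
  refine Nat.card_congr (Equiv.subtypeEquiv (Equiv.mulRight m) fun b => ?_)
  rw [Equiv.coe_mulRight, mem_inf, ← mul_assoc, Subgroup.mul_mem_cancel_right _ hh,
    Subgroup.mul_mem_cancel_right _ hm]

variable (N : Subgroup G) (X : Set G) {n : ℕ}

open scoped Classical

theorem sup_closure_translates_eq_top {a y : Fin n → G} (ha : ∀ i, a i ∈ N)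
    (hy : N ⊔ closure (X ∪ Set.range y) = ⊤) :
    N ⊔ closure (X ∪ Set.range fun i => a i * y i) = ⊤ := by
  rw [eq_top_iff, ← hy, sup_le_iff, closure_le]
  refine ⟨le_sup_left, ?_⟩
  rintro _ (hx | ⟨i, rfl⟩)
  · exact mem_sup_right (subset_closure (Or.inl hx))
  · rw [← inv_mul_cancel_left (a i) (y i)]
    exact mul_mem (mem_sup_left (inv_mem (ha i)))
      (mem_sup_right (subset_closure (Or.inr ⟨i, rfl⟩)))

theorem card_translates_mem_eq_card_inf_pow [N.Normal] {H : Subgroup G} (hH : N ⊔ H = ⊤)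
    (y : Fin n → G) :
    Nat.card {a : Fin n → G // ∀ i, a i ∈ N ∧ a i * y i ∈ H} =
      Nat.card (N ⊓ H : Subgroup G) ^ n := by
  have hy : ∀ i, y i ∈ (N : Set G) * (H : Set G) := fun i => by
    rw [← normal_mul, hH]; exact mem_top _
  rw [Nat.card_congr (Equiv.subtypePiEquivPi (p := fun i b => b ∈ N ∧ b * y i ∈ H)), Nat.card_pi]
  simp [card_mem_and_mul_mem_eq_card_inf (hy _)]

variable [Fintype G]

noncomputable def numGeneratingTranslates (y : Fin n → G) (H : Subgroup G) : ℕ :=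
  #{a : Fin n → G | (∀ i, a i ∈ N) ∧ closure (X ∪ Set.range fun i => a i * y i) = H}

theorem numGeneratingTranslates_ne_zero_iff (y : Fin n → G) (H : Subgroup G) :
    numGeneratingTranslates N X y H ≠ 0 ↔
      ∃ a : Fin n → G, (∀ i, a i ∈ N) ∧ closure (X ∪ Set.range fun i => a i * y i) = H := by
  simp [numGeneratingTranslates]

theorem subset_and_sup_eq_top_of_numGeneratingTranslates_ne_zero {y : Fin n → G}
    (hy : N ⊔ closure (X ∪ Set.range y) = ⊤) {H : Subgroup G}
    (hH : numGeneratingTranslates N X y H ≠ 0) : X ⊆ H ∧ N ⊔ H = ⊤ := by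
  obtain ⟨a, ha, rfl⟩ := (numGeneratingTranslates_ne_zero_iff N X y H).1 hH
  exact ⟨Set.subset_union_left.trans subset_closure, sup_closure_translates_eq_top N X ha hy⟩

theorem sum_numGeneratingTranslates_eq_card (y : Fin n → G) {H : Subgroup G} (hX : X ⊆ H) :
    ∑ K ∈ univ.filter (· ≤ H), numGeneratingTranslates N X y K =
      Nat.card {a : Fin n → G // ∀ i, a i ∈ N ∧ a i * y i ∈ H} := by
  rw [Nat.card_eq_fintype_card, Fintype.card_subtype, card_eq_sum_card_fiberwise
    (f := fun a => closure (X ∪ Set.range fun i => a i * y i)) (t := univ.filter (· ≤ H))]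
  · refine sum_congr rfl fun K hK => ?_
    rw [numGeneratingTranslates, filter_filter]
    refine congrArg card (filter_congr fun a _ => ⟨?_, ?_⟩)
    · rintro ⟨ha, rfl⟩
      exact ⟨fun i => ⟨ha i, (mem_filter.1 hK).2 (subset_closure (Or.inr ⟨i, rfl⟩))⟩, rfl⟩
    · rintro ⟨ha, hK⟩
      exact ⟨fun i => (ha i).1, hK⟩
  · intro a ha
    simp only [coe_filter, mem_univ, true_and, Set.mem_ofPred_eq] at ha ⊢
    exact (closure_le _).2 (Set.union_subset hX (Set.range_subset_iff.2 fun i => (ha i).2))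

theorem numGeneratingTranslates_eq [N.Normal] {y y' : Fin n → G}
    (hy : N ⊔ closure (X ∪ Set.range y) = ⊤) (hy' : N ⊔ closure (X ∪ Set.range y') = ⊤)
    (H : Subgroup G) : numGeneratingTranslates N X y H = numGeneratingTranslates N X y' H := by
  induction H using WellFoundedLT.induction with
  | _ H ih =>
  by_cases hH : X ⊆ H ∧ N ⊔ H = ⊤
  · have hsum (z : Fin n → G) :
        ∑ K ∈ univ.filter (· ≤ H), numGeneratingTranslates N X z K =
          Nat.card (N ⊓ H : Subgroup G) ^ n :=
      (sum_numGeneratingTranslates_eq_card N X z hH.1).trans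
        (card_translates_mem_eq_card_inf_pow N hH.2 z)
    have hHmem : H ∈ univ.filter (· ≤ H) := by simp
    have := (hsum y).trans (hsum y').symm
    rw [← add_sum_erase _ _ hHmem, ← add_sum_erase _ _ hHmem,
      sum_congr rfl fun K hK => ih K ((mem_filter.1 (mem_of_mem_erase hK)).2.lt_of_ne
        (ne_of_mem_erase hK))] at this
    exact add_right_cancel this
  · have h0 {z : Fin n → G} (hz : N ⊔ closure (X ∪ Set.range z) = ⊤) :
        numGeneratingTranslates N X z H = 0 := by
      by_contra h
      exact hH (subset_and_sup_eq_top_of_numGeneratingTranslates_ne_zero N X hz h)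
    rw [h0 hy, h0 hy']

end Translates

/-- Gaschütz's lemma, extended form: if `G = N⟨X, y₁,…,y_n⟩` with `N ⊴ G` and
`n ≥ d(G)`, then there are `a₁,…,a_n ∈ N` with `G = ⟨X, a₁y₁,…,a_ny_n⟩`. -/
theorem gaschuetz_extended {G : Type*} [Group G] [Finite G]
    (N : Subgroup G) [N.Normal] (X : Set G) (n : ℕ) (y : Fin n → G)
    (hd : ∃ D : Finset G, D.card ≤ n ∧ Subgroup.closure (D : Set G) = ⊤)
    (hgen : N ⊔ Subgroup.closure (X ∪ Set.range y) = ⊤) :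
    ∃ a : Fin n → G, (∀ i, a i ∈ N) ∧
      Subgroup.closure (X ∪ Set.range (fun i => a i * y i)) = ⊤ := by
  cases nonempty_fintype G
  obtain ⟨D, hDn, hD⟩ := hd
  obtain ⟨y', hDy'⟩ := D.exists_subset_range_of_card_le hDn
  have hy' : closure (X ∪ Set.range y') = ⊤ :=
    top_le_iff.1 (hD ▸ closure_mono (hDy'.trans Set.subset_union_right))
  have hy'ne : numGeneratingTranslates N X y' ⊤ ≠ 0 :=
    (numGeneratingTranslates_ne_zero_iff N X y' ⊤).2 ⟨1, fun _ => one_mem N, by simpa using hy'⟩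
  rw [← numGeneratingTranslates_eq N X hgen (by rw [hy', sup_top_eq])] at hy'ne
  exact (numGeneratingTranslates_ne_zero_iff N X y ⊤).1 hy'ne
end
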